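/- Let A and B be nonnegative n×n real matrices. Then ρ(A^{(1/2)} ∘ B^{(1/2)}) ≤ ρ((AB)^{(1/2)} ∘ (BA)^{(1/2)})^{1/2} ≤ ρ(AB)^{1/2}. -/

import Mathlib

open Matrix

/-- Spectral radius of a real matrix: max modulus of its (complex) eigenvalues. -/
noncomputable def specRad {N : Type*} [Fintype N] [DecidableEq N] (A : Matrix N N ℝ) : ℝ :=
  (spectralRadius ℂ (A.map Complex.ofReal)).toReal

/-- Operator norm induced by the Euclidean (ℓ²) norm. -/
noncomputable def l2OpNorm {N : Type*} [Fintype N] [DecidableEq N] (A : Matrix N N ℝ) : ℝ :=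
  ‖Matrix.toEuclideanCLM (𝕜 := ℝ) A‖

/-- Entrywise α-th power (with the convention 0^0 = 1, as for `Real.rpow`). -/
noncomputable def hadPow {N : Type*} (A : Matrix N N ℝ) (α : ℝ) : Matrix N N ℝ :=
  fun i j => A i j ^ α

/-!
By Gelfand's formula `ρ(M) = lim ‖Mⁿ‖^(1/n)`, taken with the `ℓ∞` operator norm (maximal absolute
row sum), spectral-radius inequalities between nonnegative matrices follow from entrywise ones.
If `|G| ≤ E^(1/2) ∘ F^(1/2)` entrywise, the Cauchy–Schwarz inequality inside each entry of a
product propagates this to `|Gⁿ| ≤ (Eⁿ)^(1/2) ∘ (Fⁿ)^(1/2)`, and once more on row sums gives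
`‖Gⁿ‖ ≤ ‖Eⁿ‖^(1/2) ‖Fⁿ‖^(1/2)`; hence `ρ(G) ≤ ρ(E)^(1/2) ρ(F)^(1/2)`. For
`C = A^(1/2) ∘ B^(1/2)` and `D = (AB)^(1/2) ∘ (BA)^(1/2)` the product estimate gives `C² ≤ D`,
so `ρ(C)² = ρ(C²) ≤ ρ(D)`, while `ρ(D) ≤ ρ(AB)^(1/2) ρ(BA)^(1/2) = ρ(AB)`.
-/

open Filter Topology

theorem spectralRadius_mul_comm {𝕜 A : Type*} [NormedField 𝕜] [Ring A] [Algebra 𝕜 A]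
    (a b : A) : spectralRadius 𝕜 (a * b) = spectralRadius 𝕜 (b * a) := by
  have key : ∀ x y : A, spectralRadius 𝕜 (x * y) ≤ spectralRadius 𝕜 (y * x) := fun x y =>
    iSup₂_le fun k hk => by
      rcases eq_or_ne k 0 with rfl | hk0
      · simp
      · have hk' : k ∈ spectrum 𝕜 (y * x) \ {0} :=
          spectrum.nonzero_mul_comm (𝕜 := 𝕜) x y ▸ ⟨hk, hk0⟩
        exact le_iSup₂_of_le k hk'.1 le_rfl
  exact (key a b).antisymm (key b a)

namespace Matrix

attribute [local instance] Matrix.linftyOpNormedAddCommGroup Matrix.linftyOpNormedRing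
  Matrix.linftyOpNormedAlgebra

theorem hadamard_hadPow_half_apply {N : Type*} (E F : Matrix N N ℝ) (i j : N) :
    (hadPow E (1 / 2) ⊙ hadPow F (1 / 2)) i j = √(E i j) * √(F i j) := by
  simp [hadPow, Real.sqrt_eq_rpow]

theorem abs_hadamard_hadPow_half_apply {N : Type*} (E F : Matrix N N ℝ) (i j : N) :
    |(hadPow E (1 / 2) ⊙ hadPow F (1 / 2)) i j| = √(E i j) * √(F i j) := by
  rw [hadamard_hadPow_half_apply, abs_of_nonneg (by positivity)]

variable {N : Type*} [Fintype N]

theorem abs_mul_apply_le_sqrt_mul_sqrt {E F G E' F' G' : Matrix N N ℝ}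
    (hE : ∀ i j, 0 ≤ E i j) (hF : ∀ i j, 0 ≤ F i j) (hG : ∀ i j, |G i j| ≤ √(E i j) * √(F i j))
    (hE' : ∀ i j, 0 ≤ E' i j) (hF' : ∀ i j, 0 ≤ F' i j)
    (hG' : ∀ i j, |G' i j| ≤ √(E' i j) * √(F' i j)) (i j : N) :
    |(G * G') i j| ≤ √((E * E') i j) * √((F * F') i j) := by
  rw [mul_apply, mul_apply, mul_apply]
  calc |∑ k, G i k * G' k j| ≤ ∑ k, |G i k| * |G' k j| := by
        simpa only [abs_mul] using Finset.abs_sum_le_sum_abs (fun k => G i k * G' k j) _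
    _ ≤ ∑ k, √(E i k * E' k j) * √(F i k * F' k j) := by
        refine Finset.sum_le_sum fun k _ => ?_
        rw [Real.sqrt_mul (hE i k), Real.sqrt_mul (hF i k)]
        calc |G i k| * |G' k j| ≤ (√(E i k) * √(F i k)) * (√(E' k j) * √(F' k j)) :=
              mul_le_mul (hG i k) (hG' k j) (abs_nonneg _) (by positivity)
          _ = √(E i k) * √(E' k j) * (√(F i k) * √(F' k j)) := by ring
    _ ≤ √(∑ k, E i k * E' k j) * √(∑ k, F i k * F' k j) :=
        Real.sum_sqrt_mul_sqrt_le _ (fun k => mul_nonneg (hE i k) (hE' k j))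
          (fun k => mul_nonneg (hF i k) (hF' k j))

theorem linfty_opNorm_le_iff {X : Matrix N N ℝ} {c : ℝ} (hc : 0 ≤ c) :
    ‖X‖ ≤ c ↔ ∀ i, ∑ j, ‖X i j‖ ≤ c := by
  lift c to NNReal using hc
  rw [← coe_nnnorm, NNReal.coe_le_coe, linfty_opNNNorm_def, Finset.sup_le_iff]
  simp [← NNReal.coe_le_coe]

theorem sum_apply_le_linfty_opNorm_of_nonneg {X : Matrix N N ℝ} {i : N}
    (hX : ∀ j, 0 ≤ X i j) : ∑ j, X i j ≤ ‖X‖ :=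
  calc ∑ j, X i j = ∑ j, ‖X i j‖ :=
        Finset.sum_congr rfl fun j _ => (Real.norm_of_nonneg (hX j)).symm
    _ ≤ ‖X‖ := (linfty_opNorm_le_iff (norm_nonneg X)).1 le_rfl i

theorem linfty_opNorm_le_sqrt_mul_sqrt {E F G : Matrix N N ℝ} (hE : ∀ i j, 0 ≤ E i j)
    (hF : ∀ i j, 0 ≤ F i j) (hG : ∀ i j, |G i j| ≤ √(E i j) * √(F i j)) :
    ‖G‖ ≤ √‖E‖ * √‖F‖ := by
  refine (linfty_opNorm_le_iff (by positivity)).2 fun i => ?_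
  calc ∑ j, ‖G i j‖ ≤ ∑ j, √(E i j) * √(F i j) := Finset.sum_le_sum fun j _ => hG i j
    _ ≤ √(∑ j, E i j) * √(∑ j, F i j) := Real.sum_sqrt_mul_sqrt_le _ (hE i) (hF i)
    _ ≤ √‖E‖ * √‖F‖ := by
        gcongr
        exacts [sum_apply_le_linfty_opNorm_of_nonneg (hE i),
          sum_apply_le_linfty_opNorm_of_nonneg (hF i)]

theorem linfty_opNorm_map_ofReal (M : Matrix N N ℝ) : ‖M.map Complex.ofReal‖ = ‖M‖ := by
  simp [linfty_opNorm_def]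

variable [DecidableEq N]

theorem abs_pow_apply_le_sqrt_mul_sqrt {E F G : Matrix N N ℝ} (hE : ∀ i j, 0 ≤ E i j)
    (hF : ∀ i j, 0 ≤ F i j) (hG : ∀ i j, |G i j| ≤ √(E i j) * √(F i j)) (n : ℕ) (i j : N) :
    |(G ^ n) i j| ≤ √((E ^ n) i j) * √((F ^ n) i j) := by
  induction n generalizing i j with
  | zero => by_cases h : i = j <;> simp [h]
  | succ n ih =>
    simp only [pow_succ]
    exact abs_mul_apply_le_sqrt_mul_sqrt (pow_apply_nonneg hE n) (pow_apply_nonneg hF n) ih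
      hE hF hG i j

theorem specRad_nonneg (M : Matrix N N ℝ) : 0 ≤ specRad M := ENNReal.toReal_nonneg

theorem spectralRadius_map_ofReal_ne_top (M : Matrix N N ℝ) :
    spectralRadius ℂ (M.map Complex.ofReal) ≠ ⊤ :=
  ne_top_of_le_ne_top (by simp [ENNReal.mul_eq_top])
    (spectrum.spectralRadius_le_pow_nnnorm_pow_one_div ℂ _ 0)

theorem tendsto_norm_pow_rpow_specRad (M : Matrix N N ℝ) :
    Tendsto (fun n : ℕ => ‖M ^ n‖ ^ (1 / n : ℝ)) atTop (𝓝 (specRad M)) := by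
  have : CompleteSpace (Matrix N N ℂ) := FiniteDimensional.complete ℂ _
  refine ((ENNReal.tendsto_toReal (spectralRadius_map_ofReal_ne_top M)).comp
    (spectrum.pow_norm_pow_one_div_tendsto_nhds_spectralRadius _)).congr fun n => ?_
  have hpow : M.map Complex.ofReal ^ n = (M ^ n).map Complex.ofReal :=
    (Matrix.map_pow M Complex.ofRealHom n).symm
  simp [hpow, linfty_opNorm_map_ofReal, Real.rpow_nonneg]

theorem specRad_mul_comm (A B : Matrix N N ℝ) : specRad (A * B) = specRad (B * A) := by
  have hmap : ∀ X Y : Matrix N N ℝ,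
      (X * Y).map Complex.ofReal = X.map Complex.ofReal * Y.map Complex.ofReal :=
    fun X Y => Matrix.map_mul (f := Complex.ofRealHom)
  rw [specRad, specRad, hmap, hmap, spectralRadius_mul_comm]

theorem specRad_mul_self (M : Matrix N N ℝ) : specRad (M * M) = specRad M ^ 2 := by
  refine tendsto_nhds_unique (tendsto_norm_pow_rpow_specRad (M * M)) ?_
  refine (((tendsto_norm_pow_rpow_specRad M).comp
    (tendsto_id.const_mul_atTop' two_pos)).pow 2).congr' ?_
  filter_upwards [eventually_ne_atTop 0] with n hn
  have hn' : (n : ℝ) ≠ 0 := Nat.cast_ne_zero.2 hn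
  rw [Function.comp_apply, id, ← sq, ← pow_mul, ← Real.rpow_natCast,
    ← Real.rpow_mul (norm_nonneg _)]
  congr 1
  push_cast
  field_simp

theorem specRad_le_sqrt_mul_sqrt {E F G : Matrix N N ℝ} (hE : ∀ i j, 0 ≤ E i j)
    (hF : ∀ i j, 0 ≤ F i j) (hG : ∀ i j, |G i j| ≤ √(E i j) * √(F i j)) :
    specRad G ≤ √(specRad E) * √(specRad F) := by
  refine le_of_tendsto_of_tendsto' (tendsto_norm_pow_rpow_specRad G)
    ((tendsto_norm_pow_rpow_specRad E).sqrt.mul (tendsto_norm_pow_rpow_specRad F).sqrt)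
    fun n => ?_
  have hnorm : ‖G ^ n‖ ≤ √‖E ^ n‖ * √‖F ^ n‖ :=
    linfty_opNorm_le_sqrt_mul_sqrt (pow_apply_nonneg hE n) (pow_apply_nonneg hF n)
      (abs_pow_apply_le_sqrt_mul_sqrt hE hF hG n)
  calc ‖G ^ n‖ ^ (1 / n : ℝ) ≤ (√‖E ^ n‖ * √‖F ^ n‖) ^ (1 / n : ℝ) := by gcongr
    _ = √(‖E ^ n‖ ^ (1 / n : ℝ)) * √(‖F ^ n‖ ^ (1 / n : ℝ)) := by
        rw [Real.mul_rpow (by positivity) (by positivity)]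
        simp only [Real.sqrt_eq_rpow, ← Real.rpow_mul (norm_nonneg _), mul_comm]

theorem specRad_le_specRad_of_abs_le {P Q : Matrix N N ℝ} (h : ∀ i j, |P i j| ≤ Q i j) :
    specRad P ≤ specRad Q := by
  have hQ : ∀ i j, 0 ≤ Q i j := fun i j => (abs_nonneg _).trans (h i j)
  simpa [Real.mul_self_sqrt (specRad_nonneg Q)] using
    specRad_le_sqrt_mul_sqrt hQ hQ fun i j => by simpa [Real.mul_self_sqrt (hQ i j)] using h i j

end Matrix

theorem stmt5 {N : Type*} [Fintype N] [DecidableEq N] (A B : Matrix N N ℝ)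
    (hA : ∀ i j, 0 ≤ A i j) (hB : ∀ i j, 0 ≤ B i j) :
    specRad (hadPow A (1/2) ⊙ hadPow B (1/2)) ≤
        specRad (hadPow (A * B) (1/2) ⊙ hadPow (B * A) (1/2)) ^ ((1 : ℝ) / 2) ∧
      specRad (hadPow (A * B) (1/2) ⊙ hadPow (B * A) (1/2)) ^ ((1 : ℝ) / 2) ≤
        specRad (A * B) ^ ((1 : ℝ) / 2) := by
  have hAB : ∀ i j, 0 ≤ (A * B) i j := fun i j =>
    Finset.sum_nonneg fun k _ => mul_nonneg (hA i k) (hB k j)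
  have hBA : ∀ i j, 0 ≤ (B * A) i j := fun i j =>
    Finset.sum_nonneg fun k _ => mul_nonneg (hB i k) (hA k j)
  have hC : ∀ i j, |(hadPow A (1/2) ⊙ hadPow B (1/2)) i j| ≤ √(A i j) * √(B i j) :=
    fun i j => (abs_hadamard_hadPow_half_apply A B i j).le
  have hCC : ∀ i j, |((hadPow A (1/2) ⊙ hadPow B (1/2)) * (hadPow A (1/2) ⊙ hadPow B (1/2))) i j|
      ≤ (hadPow (A * B) (1/2) ⊙ hadPow (B * A) (1/2)) i j := fun i j => by
    rw [hadamard_hadPow_half_apply]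
    exact abs_mul_apply_le_sqrt_mul_sqrt hA hB hC hB hA
      (fun k l => (hC k l).trans_eq (mul_comm _ _)) i j
  constructor
  · rw [← Real.sqrt_eq_rpow, Real.le_sqrt (specRad_nonneg _) (specRad_nonneg _),
      ← specRad_mul_self]
    exact specRad_le_specRad_of_abs_le hCC
  · refine Real.rpow_le_rpow (specRad_nonneg _) ?_ (by norm_num)
    calc _ ≤ √(specRad (A * B)) * √(specRad (B * A)) :=
          specRad_le_sqrt_mul_sqrt hAB hBA (abs_hadamard_hadPow_half_apply _ _ · · |>.le)
      _ = specRad (A * B) := by rw [← specRad_mul_comm, Real.mul_self_sqrt (specRad_nonneg _)]
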